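/- arXiv:1908.00534 — 4 statements merged into one kernel-verified Lean document; each statement's English description precedes it below -/
import Mathlib

section
/- Let A be a bounded distributive lattice and let G(A) := {⟨a, b⟩ ∈ A × A : a ∧ b = 0} with operations ⟨a,b⟩ ⊓ ⟨c,d⟩ := ⟨a ∧ c, b ∨ d⟩, ⟨a,b⟩ ⊔ ⟨c,d⟩ := ⟨a ∨ c, b ∧ d⟩, ¬⟨a,b⟩ := ⟨b,a⟩, 1 := ⟨1,0⟩ and 0 := ⟨0,1⟩. Then G(A) is a Kleene algebra, i.e., a De Morgan algebra satisfying x ⊓ ¬x ≤ y ⊔ ¬y. -/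
/-- The universe of `G(A)`: pairs `⟨a, b⟩` with `a ∧ b = 0`. -/
def KleeneG (α : Type*) [DistribLattice α] [BoundedOrder α] : Type _ :=
  {p : α × α // p.1 ⊓ p.2 = ⊥}

namespace KleeneG

variable {α : Type*} [DistribLattice α] [BoundedOrder α]

def inf (p q : KleeneG α) : KleeneG α :=
  ⟨(p.val.1 ⊓ q.val.1, p.val.2 ⊔ q.val.2), by
    apply le_antisymm _ bot_le
    rw [inf_sup_left]
    refine sup_le (le_trans ?_ p.property.le) (le_trans ?_ q.property.le)
    · exact inf_le_inf (inf_le_left) le_rfl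
    · exact inf_le_inf (inf_le_right) le_rfl⟩

def sup (p q : KleeneG α) : KleeneG α :=
  ⟨(p.val.1 ⊔ q.val.1, p.val.2 ⊓ q.val.2), by
    apply le_antisymm _ bot_le
    rw [inf_comm, inf_sup_left]
    refine sup_le ?_ ?_
    · exact le_trans (inf_le_inf inf_le_left le_rfl) (by rw [inf_comm]; exact p.property.le)
    · exact le_trans (inf_le_inf inf_le_right le_rfl) (by rw [inf_comm]; exact q.property.le)⟩

def neg (p : KleeneG α) : KleeneG α :=
  ⟨(p.val.2, p.val.1), by rw [inf_comm]; exact p.property⟩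

def one : KleeneG α := ⟨((⊤ : α), (⊥ : α)), inf_bot_eq ⊤⟩

def zero : KleeneG α := ⟨((⊥ : α), (⊤ : α)), bot_inf_eq ⊤⟩

/-- The component-wise order on `G(A)`. -/
def le (p q : KleeneG α) : Prop := p.val.1 ≤ q.val.1 ∧ q.val.2 ≤ p.val.2

end KleeneG

/-- For a bounded distributive lattice `A`, the algebra
`G(A) = {⟨a,b⟩ : a ∧ b = 0}` with `⟨a,b⟩ ⊓ ⟨c,d⟩ = ⟨a∧c, b∨d⟩`,
`⟨a,b⟩ ⊔ ⟨c,d⟩ = ⟨a∨c, b∧d⟩`, `¬⟨a,b⟩ = ⟨b,a⟩`, `1 = ⟨1,0⟩`, `0 = ⟨0,1⟩` is a Kleene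
algebra: a bounded distributive lattice (w.r.t. the component-wise order) with an
involutive negation satisfying the De Morgan laws and the Kleene inequality. -/
theorem stmt_5 {α : Type*} [DistribLattice α] [BoundedOrder α] :
    -- `⊓` and `⊔` are the lattice operations for the component-wise order:
    (∀ p q : KleeneG α, KleeneG.le (KleeneG.inf p q) p ∧ KleeneG.le (KleeneG.inf p q) q ∧
      ∀ r : KleeneG α, KleeneG.le r p → KleeneG.le r q → KleeneG.le r (KleeneG.inf p q)) ∧
    (∀ p q : KleeneG α, KleeneG.le p (KleeneG.sup p q) ∧ KleeneG.le q (KleeneG.sup p q) ∧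
      ∀ r : KleeneG α, KleeneG.le p r → KleeneG.le q r → KleeneG.le (KleeneG.sup p q) r) ∧
    -- partial order:
    (∀ p : KleeneG α, KleeneG.le p p) ∧
    (∀ p q r : KleeneG α, KleeneG.le p q → KleeneG.le q r → KleeneG.le p r) ∧
    (∀ p q : KleeneG α, KleeneG.le p q → KleeneG.le q p → p = q) ∧
    -- bounds:
    (∀ p : KleeneG α, KleeneG.le KleeneG.zero p ∧ KleeneG.le p KleeneG.one) ∧
    -- distributivity:
    (∀ p q r : KleeneG α,
      KleeneG.inf p (KleeneG.sup q r) = KleeneG.sup (KleeneG.inf p q) (KleeneG.inf p r)) ∧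
    -- De Morgan algebra structure:
    (∀ p : KleeneG α, KleeneG.neg (KleeneG.neg p) = p) ∧
    (∀ p q : KleeneG α, KleeneG.neg (KleeneG.inf p q) = KleeneG.sup (KleeneG.neg p) (KleeneG.neg q)) ∧
    (∀ p q : KleeneG α, KleeneG.neg (KleeneG.sup p q) = KleeneG.inf (KleeneG.neg p) (KleeneG.neg q)) ∧
    -- the Kleene inequality:
    (∀ p q : KleeneG α,
      KleeneG.le (KleeneG.inf p (KleeneG.neg p)) (KleeneG.sup q (KleeneG.neg q))) := by
  refine ⟨?_, ?_, ?_, ?_, ?_, ?_, ?_, ?_, ?_, ?_, ?_⟩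
  · intro p q
    exact ⟨⟨inf_le_left, le_sup_left⟩, ⟨inf_le_right, le_sup_right⟩,
      fun r ⟨h1, h2⟩ ⟨h3, h4⟩ => ⟨le_inf h1 h3, sup_le h2 h4⟩⟩
  · intro p q
    exact ⟨⟨le_sup_left, inf_le_left⟩, ⟨le_sup_right, inf_le_right⟩,
      fun r ⟨h1, h2⟩ ⟨h3, h4⟩ => ⟨sup_le h1 h3, le_inf h2 h4⟩⟩
  · exact fun p => ⟨le_rfl, le_rfl⟩
  · exact fun p q r ⟨h1, h2⟩ ⟨h3, h4⟩ => ⟨h1.trans h3, h4.trans h2⟩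
  · intro p q ⟨h1, h2⟩ ⟨h3, h4⟩
    exact Subtype.ext (Prod.ext (le_antisymm h1 h3) (le_antisymm h4 h2))
  · exact fun p => ⟨⟨bot_le, le_top⟩, ⟨le_top, bot_le⟩⟩
  · intro p q r
    apply Subtype.ext
    apply Prod.ext
    · exact inf_sup_left _ _ _
    · exact sup_inf_left _ _ _
  · exact fun p => Subtype.ext rfl
  · exact fun p q => Subtype.ext rfl
  · exact fun p q => Subtype.ext rfl
  · intro p q
    constructor
    · simp only [KleeneG.inf, KleeneG.neg, KleeneG.sup]
      rw [p.property]
      exact bot_le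
    · simp only [KleeneG.inf, KleeneG.neg, KleeneG.sup]
      rw [inf_comm, q.property]
      exact bot_le
end

section
/- Every bounded lattice homomorphism f : A → B between bounded distributive lattices induces, by component-wise application, a Kleene algebra homomorphism G(f) : G(A) → G(B), and this assignment is functorial: G(id) = id and G(g ∘ f) = G(g) ∘ G(f). -/
namespace KleeneG

variable {α : Type*} [DistribLattice α] [BoundedOrder α]

/-- The component-wise application of a bounded lattice homomorphism. -/
def map {β : Type*} [DistribLattice β] [BoundedOrder β] (f : BoundedLatticeHom α β)
    (p : KleeneG α) : KleeneG β :=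
  ⟨(f p.val.1, f p.val.2), by
    rw [← map_inf, p.property]; exact map_bot f⟩

end KleeneG

/-- Every bounded lattice homomorphism `f : A → B` between bounded distributive
lattices induces, component-wise, a Kleene algebra homomorphism `G(f) : G(A) → G(B)`
(preserving `⊓`, `⊔`, `¬`, `0` and `1`), and this assignment is functorial:
`G(id) = id` and `G(g ∘ f) = G(g) ∘ G(f)`. -/
theorem stmt_6 {α β γ : Type*} [DistribLattice α] [BoundedOrder α]
    [DistribLattice β] [BoundedOrder β] [DistribLattice γ] [BoundedOrder γ]
    (f : BoundedLatticeHom α β) (g : BoundedLatticeHom β γ) :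
    (∀ p q : KleeneG α, KleeneG.map f (KleeneG.inf p q) =
      KleeneG.inf (KleeneG.map f p) (KleeneG.map f q)) ∧
    (∀ p q : KleeneG α, KleeneG.map f (KleeneG.sup p q) =
      KleeneG.sup (KleeneG.map f p) (KleeneG.map f q)) ∧
    (∀ p : KleeneG α, KleeneG.map f (KleeneG.neg p) = KleeneG.neg (KleeneG.map f p)) ∧
    (KleeneG.map f KleeneG.zero = KleeneG.zero) ∧
    (KleeneG.map f KleeneG.one = KleeneG.one) ∧
    (KleeneG.map (BoundedLatticeHom.id α) = (id : KleeneG α → KleeneG α)) ∧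
    (KleeneG.map (g.comp f) = KleeneG.map g ∘ KleeneG.map f) := by
  refine ⟨fun p q => ?_, fun p q => ?_, fun p => ?_, ?_, ?_, ?_, ?_⟩
  · exact Subtype.ext (Prod.ext (map_inf f _ _) (map_sup f _ _))
  · exact Subtype.ext (Prod.ext (map_sup f _ _) (map_inf f _ _))
  · rfl
  · exact Subtype.ext (Prod.ext (map_bot f) (map_top f))
  · exact Subtype.ext (Prod.ext (map_top f) (map_bot f))
  · rfl
  · rfl
end

section
/- Gödel's translation is sound: for any Heyting algebra identity, if an equation ε ≈ δ is a semantic consequence of a set Φ of equations over all Heyting algebras, then the translated equation τ(ε) ≈ τ(δ) is a semantic consequence over all interior algebras of τ(Φ) together with the equations x_j ≈ □x_j for all variables x_j involved, where τ replaces ¬x by □¬x, x → y by □(x → y), and preserves ∧, ∨, 0, 1. -/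
/-- Terms in the language of Heyting algebras (`∧, ∨, →, ¬, 0, 1`). -/
inductive HTerm (ν : Type) where
  | var : ν → HTerm ν
  | bot : HTerm ν
  | top : HTerm ν
  | and : HTerm ν → HTerm ν → HTerm ν
  | or : HTerm ν → HTerm ν → HTerm ν
  | imp : HTerm ν → HTerm ν → HTerm ν
  | neg : HTerm ν → HTerm ν

/-- Evaluation of a Heyting term under an assignment. -/
def HTerm.eval {ν : Type} {α : Type*} [HeytingAlgebra α] (h : ν → α) : HTerm ν → α
  | .var x => h x
  | .bot => ⊥
  | .top => ⊤
  | .and t s => t.eval h ⊓ s.eval h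
  | .or t s => t.eval h ⊔ s.eval h
  | .imp t s => t.eval h ⇨ s.eval h
  | .neg t => (t.eval h)ᶜ

/-- Modal terms: the language of interior algebras (`∧, ∨, →, ¬, 0, 1, □`). -/
inductive MTerm (ν : Type) where
  | var : ν → MTerm ν
  | bot : MTerm ν
  | top : MTerm ν
  | and : MTerm ν → MTerm ν → MTerm ν
  | or : MTerm ν → MTerm ν → MTerm ν
  | imp : MTerm ν → MTerm ν → MTerm ν
  | neg : MTerm ν → MTerm ν
  | box : MTerm ν → MTerm ν

/-- Evaluation of a modal term in a Boolean algebra with an operator `□`. -/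
def MTerm.eval {ν : Type} {β : Type*} [BooleanAlgebra β] (box : β → β) (h : ν → β) :
    MTerm ν → β
  | .var x => h x
  | .bot => ⊥
  | .top => ⊤
  | .and t s => t.eval box h ⊓ s.eval box h
  | .or t s => t.eval box h ⊔ s.eval box h
  | .imp t s => t.eval box h ⇨ s.eval box h
  | .neg t => (t.eval box h)ᶜ
  | .box t => box (t.eval box h)

/-- The Gödel translation: `τ(¬t) = □¬τ(t)`, `τ(t → s) = □(τ(t) → τ(s))`, and `τ`
commutes with `∧, ∨, 0, 1` and variables. -/
def godel {ν : Type} : HTerm ν → MTerm ν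
  | .var x => .var x
  | .bot => .bot
  | .top => .top
  | .and t s => .and (godel t) (godel s)
  | .or t s => .or (godel t) (godel s)
  | .imp t s => .box (.imp (godel t) (godel s))
  | .neg t => .box (.neg (godel t))

section Aux

variable {β : Type} [BooleanAlgebra β] (box : β → β)

lemma box_mono (hmeet : ∀ a b : β, box (a ⊓ b) = box a ⊓ box b) {a b : β} (hab : a ≤ b) : box a ≤ box b := by
  have h1 : a ⊓ b = a := inf_eq_left.2 hab
  calc box a = box (a ⊓ b) := by rw [h1]
    _ = box a ⊓ box b := hmeet a b
    _ ≤ box b := inf_le_right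

lemma box_idem (hle : ∀ b : β, box b ≤ b) (hidem : ∀ b : β, box b ≤ box (box b)) (b : β) : box (box b) = box b :=
  le_antisymm (hle _) (hidem b)

/-- The Heyting algebra of open elements of an interior algebra. -/
def opensHeyting (htop : box ⊤ = ⊤) (hle : ∀ b : β, box b ≤ b)
    (hidem : ∀ b : β, box b ≤ box (box b))
    (hmeet : ∀ a b : β, box (a ⊓ b) = box a ⊓ box b) : HeytingAlgebra {b : β // box b = b} :=
  { Subtype.partialOrder _ with
    sup := fun a b => ⟨a.1 ⊔ b.1, le_antisymm (hle _)
      (sup_le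
        (by calc a.1 = box a.1 := a.2.symm
              _ ≤ box (a.1 ⊔ b.1) := box_mono box hmeet le_sup_left)
        (by calc b.1 = box b.1 := b.2.symm
              _ ≤ box (a.1 ⊔ b.1) := box_mono box hmeet le_sup_right))⟩
    le_sup_left := fun a b => le_sup_left (α := β)
    le_sup_right := fun a b => le_sup_right (α := β)
    sup_le := fun a b c h1 h2 => sup_le (α := β) h1 h2
    inf := fun a b => ⟨a.1 ⊓ b.1, by rw [hmeet, a.2, b.2]⟩
    inf_le_left := fun a b => inf_le_left (α := β)
    inf_le_right := fun a b => inf_le_right (α := β)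
    le_inf := fun a b c h1 h2 => le_inf (α := β) h1 h2
    top := ⟨⊤, htop⟩
    le_top := fun a => le_top (α := β)
    bot := ⟨⊥, le_antisymm (hle _) bot_le⟩
    bot_le := fun a => bot_le (α := β)
    himp := fun a b => ⟨box (a.1 ⇨ b.1), box_idem box hle hidem _⟩
    compl := fun a => ⟨box (a.1 ⇨ ⊥), box_idem box hle hidem _⟩
    le_himp_iff := by
      intro a b c
      constructor
      · intro hh
        have : a.1 ≤ b.1 ⇨ c.1 := le_trans hh (hle _)
        exact le_himp_iff.1 this
      · intro hh
        have : a.1 ≤ b.1 ⇨ c.1 := le_himp_iff.2 hh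
        calc a.1 = box a.1 := a.2.symm
          _ ≤ box (b.1 ⇨ c.1) := box_mono box hmeet this
    himp_bot := fun a => rfl }

lemma godel_eval {ν : Type} (htop : box ⊤ = ⊤) (hle : ∀ b : β, box b ≤ b)
    (hidem : ∀ b : β, box b ≤ box (box b))
    (hmeet : ∀ a b : β, box (a ⊓ b) = box a ⊓ box b) (h : ν → β) (hopen : ∀ x : ν, h x = box (h x)) :
    ∀ t : HTerm ν,
      letI := opensHeyting box htop hle hidem hmeet
      (HTerm.eval (fun x => (⟨h x, (hopen x).symm⟩ : {b : β // box b = b})) t).1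
        = MTerm.eval box h (godel t) := by
  letI := opensHeyting box htop hle hidem hmeet
  intro t
  induction t with
  | var x => rfl
  | bot => rfl
  | top => rfl
  | and t s iht ihs => simp only [HTerm.eval, godel, MTerm.eval, ← iht, ← ihs]; rfl
  | or t s iht ihs => simp only [HTerm.eval, godel, MTerm.eval, ← iht, ← ihs]; rfl
  | imp t s iht ihs => simp only [HTerm.eval, godel, MTerm.eval, ← iht, ← ihs]; rfl
  | neg t iht =>
      simp only [HTerm.eval, godel, MTerm.eval, ← iht]
      show box (_ ⇨ ⊥) = box _ᶜ
      rw [himp_bot]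

end Aux

/-- Soundness of Gödel's translation: if `ε ≈ δ` is a semantic consequence of a set
`Φ` of equations over all Heyting algebras, then `τ(ε) ≈ τ(δ)` is a semantic
consequence, over all interior algebras, of `τ(Φ)` together with the equations
`x ≈ □x` for all variables. -/
theorem stmt_12 {ν : Type} (Φ : Set (HTerm ν × HTerm ν)) (ε δ : HTerm ν)
    (hcons : ∀ (α : Type) [HeytingAlgebra α] (h : ν → α),
      (∀ p ∈ Φ, HTerm.eval h p.1 = HTerm.eval h p.2) →
        HTerm.eval h ε = HTerm.eval h δ) :
    ∀ (β : Type) [BooleanAlgebra β] (box : β → β),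
      box ⊤ = ⊤ → (∀ b : β, box b ≤ b) → (∀ b : β, box b ≤ box (box b)) →
      (∀ a b : β, box (a ⊓ b) = box a ⊓ box b) →
      ∀ h : ν → β, (∀ x : ν, h x = box (h x)) →
        (∀ p ∈ Φ, MTerm.eval box h (godel p.1) = MTerm.eval box h (godel p.2)) →
        MTerm.eval box h (godel ε) = MTerm.eval box h (godel δ) := by
  intro β _ box htop hle hidem hmeet h hopen hΦ
  letI := opensHeyting box htop hle hidem hmeet
  set h' : ν → {b : β // box b = b} := fun x => ⟨h x, (hopen x).symm⟩ with hh'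
  have key := godel_eval box htop hle hidem hmeet h hopen
  have := hcons {b : β // box b = b} h' (fun p hp => by
    apply Subtype.ext
    rw [key p.1, key p.2]
    exact hΦ p hp)
  calc MTerm.eval box h (godel ε) = (HTerm.eval h' ε).1 := (key ε).symm
    _ = (HTerm.eval h' δ).1 := by rw [this]
    _ = MTerm.eval box h (godel δ) := key δ
end

section
/- Kolmogorov's translation is sound: if an equation ε ≈ δ is a semantic consequence of a set Φ of equations over all Boolean algebras, then τ(ε) ≈ τ(δ) is a semantic consequence over all Heyting algebras of τ(Φ) together with the equations x_j ≈ ¬¬x_j for all variables involved, where τ fixes 0, 1, ¬, variables and replaces each binary operation t ⋆ s (⋆ ∈ {∧, ∨, →}) by ¬¬(τ(t) ⋆ τ(s)). -/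
/-- The Kolmogorov translation: it fixes `0`, `1`, `¬` and variables, and replaces
each binary operation `t ⋆ s` (`⋆ ∈ {∧, ∨, →}`) by `¬¬(τ(t) ⋆ τ(s))`. -/
def kolmogorov {ν : Type} : HTerm ν → HTerm ν
  | .var x => .var x
  | .bot => .bot
  | .top => .top
  | .and t s => .neg (.neg (.and (kolmogorov t) (kolmogorov s)))
  | .or t s => .neg (.neg (.or (kolmogorov t) (kolmogorov s)))
  | .imp t s => .neg (.neg (.imp (kolmogorov t) (kolmogorov s)))
  | .neg t => .neg (kolmogorov t)

lemma kolmogorov_eval_eq {ν : Type} {β : Type} [HeytingAlgebra β] (h : ν → β)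
    (hreg : ∀ x : ν, h x = (h x)ᶜᶜ) (t : HTerm ν) :
    HTerm.eval h (kolmogorov t) =
      ((HTerm.eval (fun x => (⟨h x, ((hreg x).symm : (h x)ᶜᶜ = h x)⟩ :
        Heyting.Regular β)) t : Heyting.Regular β) : β) := by
  induction t with
  | var x => rfl
  | bot => rfl
  | top => rfl
  | and t s iht ihs =>
      show ((HTerm.eval h (kolmogorov t) ⊓ HTerm.eval h (kolmogorov s))ᶜᶜ) = _
      rw [iht, ihs]
      rw [← Heyting.Regular.coe_inf]
      exact (Heyting.Regular.prop _).eq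
  | or t s iht ihs =>
      show ((HTerm.eval h (kolmogorov t) ⊔ HTerm.eval h (kolmogorov s))ᶜᶜ) = _
      rw [iht, ihs, ← Heyting.Regular.coe_sup]; rfl
  | imp t s iht ihs =>
      show ((HTerm.eval h (kolmogorov t) ⇨ HTerm.eval h (kolmogorov s))ᶜᶜ) = _
      rw [iht, ihs]
      rw [← Heyting.Regular.coe_himp]
      exact (Heyting.Regular.prop _).eq
  | neg t iht =>
      show ((HTerm.eval h (kolmogorov t))ᶜ) = _
      rw [iht, ← Heyting.Regular.coe_compl]; rfl

/-- Soundness of Kolmogorov's translation: if `ε ≈ δ` is a semantic consequence of a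
set `Φ` of equations over all Boolean algebras, then `τ(ε) ≈ τ(δ)` is a semantic
consequence, over all Heyting algebras, of `τ(Φ)` together with the equations
`x ≈ ¬¬x` for all variables. -/
theorem stmt_13 {ν : Type} (Φ : Set (HTerm ν × HTerm ν)) (ε δ : HTerm ν)
    (hcons : ∀ (α : Type) [BooleanAlgebra α] (h : ν → α),
      (∀ p ∈ Φ, HTerm.eval h p.1 = HTerm.eval h p.2) →
        HTerm.eval h ε = HTerm.eval h δ) :
    ∀ (β : Type) [HeytingAlgebra β] (h : ν → β),
      (∀ x : ν, h x = (h x)ᶜᶜ) →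
      (∀ p ∈ Φ, HTerm.eval h (kolmogorov p.1) = HTerm.eval h (kolmogorov p.2)) →
      HTerm.eval h (kolmogorov ε) = HTerm.eval h (kolmogorov δ) := by
  intro β _ h hreg hΦ
  set h' : ν → Heyting.Regular β :=
    fun x => ⟨h x, ((hreg x).symm : (h x)ᶜᶜ = h x)⟩ with hh'
  have key : ∀ t : HTerm ν, HTerm.eval h (kolmogorov t) = ((HTerm.eval h' t : Heyting.Regular β) : β) :=
    kolmogorov_eval_eq h hreg
  rw [key ε, key δ]
  congr 1
  apply hcons (Heyting.Regular β) h'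
  intro p hp
  have := hΦ p hp
  rw [key p.1, key p.2] at this
  exact Heyting.Regular.coe_injective this
end
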